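/- arXiv:2404.17150 — 2 statements merged into one kernel-verified Lean document; each statement's English description precedes it below -/
import Mathlib

section
/- Let m = \sum_{i=0}^{s} 2^{t_i} with t_0 > ... > t_s \ge 0, and split m = m_1 + m_2 where m_1 = \sum_{i=0}^{a} 2^{t_i} and m_2 = \sum_{i=a+1}^{s} 2^{t_i} for some a < s. Define ex(m) = \sum_{i=0}^{s} t_i 2^{t_i} + \sum_{i=0}^{s} 2 i 2^{t_i} (computed with respect to each number's own binary expansion). Then ex(m) = ex(m_1) + ex(m_2) + 2(a+1) m_2. -/
/-- Closed-form hypercube edge-isoperimetric function: for `m` with binary expansion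
`m = 2^{t_0} + ... + 2^{t_s}` with `t_0 > ... > t_s`, this equals
`∑ t_i 2^{t_i} + ∑ 2 i 2^{t_i}`. -/
def ex : ℕ → ℕ
  | 0 => 0
  | (m+1) =>
      Nat.log2 (m+1) * 2 ^ Nat.log2 (m+1) + 2 * ((m+1) - 2 ^ Nat.log2 (m+1))
        + ex ((m+1) - 2 ^ Nat.log2 (m+1))
decreasing_by
  exact Nat.sub_lt (Nat.succ_pos m) (Nat.two_pow_pos _)

/-!
Writing `m = ∑_{j ∈ S} 2^j`, the recursion defining `ex` peels off the top bit, so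
`ex m = ∑_{j ∈ S} (j + 2 c_j) 2^j`, where `c_j` is the number of bits of `m` above `j`.
When the bits of `m₂` all lie below those of `m₁`, the bits of `m₁` see the same `c_j` in
`m₁ + m₂` as in `m₁`, while each bit of `m₂` sees the `a + 1` bits of `m₁` in addition.
-/

open Finset

lemma ex_two_pow_add {M r : ℕ} (hr : r < 2 ^ M) :
    ex (2 ^ M + r) = M * 2 ^ M + 2 * r + ex r := by
  have hlog : Nat.log2 (2 ^ M + r) = M := by
    rw [Nat.log2_eq_log_two]
    refine Nat.log_eq_of_pow_le_of_lt_pow (Nat.le_add_right _ _) ?_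
    rw [pow_succ]
    omega
  obtain ⟨n, hn⟩ : ∃ n, 2 ^ M + r = n + 1 := ⟨2 ^ M + r - 1, by have := Nat.two_pow_pos M; omega⟩
  rw [hn, ex, ← hn, hlog, Nat.add_sub_cancel_left]

lemma ex_sum_two_pow (S : Finset ℕ) :
    ex (∑ j ∈ S, 2 ^ j) = ∑ j ∈ S, (j + 2 * #{k ∈ S | j < k}) * 2 ^ j := by
  induction S using Finset.induction_on_max with
  | empty => simp [ex]
  | insert M S hlt ih =>
    have hM : M ∉ S := fun h => lt_irrefl M (hlt M h)
    have hcount : ∀ j ∈ S, #{k ∈ insert M S | j < k} = #{k ∈ S | j < k} + 1 := by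
      intro j hj
      rw [filter_insert, if_pos (hlt j hj), card_insert_of_notMem (by simp [hM])]
    have htop : #{k ∈ insert M S | M < k} = 0 := by
      rw [card_eq_zero, filter_eq_empty_iff]
      intro k hk
      rcases mem_insert.mp hk with rfl | hk
      · exact lt_irrefl k
      · exact (hlt k hk).not_gt
    rw [sum_insert hM, sum_insert hM, ex_two_pow_add (Nat.geomSum_lt le_rfl hlt), ih, htop,
      mul_zero, add_zero, mul_sum, add_assoc, ← sum_add_distrib]
    exact congrArg _ <| sum_congr rfl fun j hj => by rw [hcount j hj]; ring

lemma ex_add_of_forall_lt {S T : Finset ℕ} (hTS : ∀ x ∈ T, ∀ y ∈ S, x < y) :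
    ex (∑ j ∈ S, 2 ^ j + ∑ j ∈ T, 2 ^ j) =
      ex (∑ j ∈ S, 2 ^ j) + ex (∑ j ∈ T, 2 ^ j) + 2 * #S * ∑ j ∈ T, 2 ^ j := by
  have hdisj : Disjoint S T := disjoint_left.mpr fun y hyS hyT => lt_irrefl y (hTS y hyT y hyS)
  have hcountS : ∀ j ∈ S, #{k ∈ S ∪ T | j < k} = #{k ∈ S | j < k} := by
    intro j hj
    rw [filter_union, filter_false_of_mem fun k hk => (hTS k hk j hj).not_gt, union_empty]
  have hcountT : ∀ j ∈ T, #{k ∈ S ∪ T | j < k} = #S + #{k ∈ T | j < k} := by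
    intro j hj
    rw [filter_union, filter_true_of_mem fun k hk => hTS j hj k hk,
      card_union_of_disjoint (hdisj.mono_right (filter_subset _ _))]
  rw [← sum_union hdisj, ex_sum_two_pow, ex_sum_two_pow, ex_sum_two_pow, sum_union hdisj,
    sum_congr rfl fun j hj => by rw [hcountS j hj], mul_sum, add_assoc, ← sum_add_distrib]
  exact congrArg _ <| sum_congr rfl fun j hj => by rw [hcountT j hj]; ring

/-- Splitting property: if `m = ∑_{i=0}^{s} 2^{t_i}` with strictly decreasing exponents,
`m₁ = ∑_{i=0}^{a} 2^{t_i}` and `m₂ = ∑_{i=a+1}^{s} 2^{t_i}` for some `a < s`, then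
`ex(m) = ex(m₁) + ex(m₂) + 2(a+1) m₂`. -/
theorem ex_split (s a m m₁ m₂ : ℕ) (t : Fin (s+1) → ℕ) (ht : StrictAnti t) (ha : a < s)
    (hm : m = ∑ i, 2 ^ (t i))
    (hm₁ : m₁ = ∑ i ∈ univ.filter (fun i : Fin (s+1) => (i : ℕ) ≤ a), 2 ^ (t i))
    (hm₂ : m₂ = ∑ i ∈ univ.filter (fun i : Fin (s+1) => a < (i : ℕ)), 2 ^ (t i)) :
    ex m = ex m₁ + ex m₂ + 2 * (a + 1) * m₂ := by
  set S := (univ.filter fun i : Fin (s+1) => (i : ℕ) ≤ a).image t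
  set T := (univ.filter fun i : Fin (s+1) => a < (i : ℕ)).image t
  have hm₁S : m₁ = ∑ j ∈ S, 2 ^ j := by rw [hm₁, sum_image fun _ _ _ _ h => ht.injective h]
  have hm₂T : m₂ = ∑ j ∈ T, 2 ^ j := by rw [hm₂, sum_image fun _ _ _ _ h => ht.injective h]
  have hm_eq : m = m₁ + m₂ := by
    rw [hm, hm₁, hm₂, ← sum_filter_add_sum_filter_not univ fun i : Fin (s+1) => (i : ℕ) ≤ a]
    simp only [not_le]
  have hcard : #S = a + 1 := by
    rw [card_image_of_injective _ ht.injective,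
      show univ.filter (fun i : Fin (s+1) => (i : ℕ) ≤ a) = Iic ⟨a, by omega⟩ by
        ext i; simp [Fin.le_def], Fin.card_Iic]
  have hTS : ∀ x ∈ T, ∀ y ∈ S, x < y := by
    simp only [S, T, mem_image, mem_filter, mem_univ, true_and]
    rintro _ ⟨i, hi, rfl⟩ _ ⟨i', hi', rfl⟩
    exact ht (Fin.lt_def.mpr (by omega))
  rw [hm_eq, hm₁S, hm₂T, ex_add_of_forall_lt hTS, hcard]
end

section
/- For integers n \ge 9 and f = 0 if n is even, f = 1 if n is odd: if m = m_{n,r} + p where 1 \le r \le \lceil n/2 \rceil - 4, 1 \le p < 2^{2r-1-f}, and m_{n,r} = \sum_{i=0}^{2} 2^{n-4-i} + \sum_{i=0}^{\lceil n/2 \rceil - 4 - r} 2^{n-8-2i} + 2^{2r-1-f}, then (n+1)m - ex(m) > 2^{n-1}, where ex is the closed-form hypercube edge function of binary expansions. -/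
/-!
Writing `ξ(m) = (n + 1) m - ex m`, the whole argument is the leading-bit recursion
`ex (2^t + q) = t 2^t + 2 q + ex q` for `q < 2^t`. With `u = 2r - 1 - f` and
`K = ⌈n/2⌉ - 3 - r` we have `n = u + 2K + 7`, and peeling every bit of `m_{n,r}` above `2^u`
gives `ξ(m_{n,r} + p) = 2^(n-1) + u p - ex p` for `p < 2^u` (so `ξ(m_{n,r}) = 2^(n-1)`).
It remains that `ex p < u p` for `0 < p < 2^u`.
-/

open Finset

lemma ex_zero : ex 0 = 0 := by
  rw [ex]

lemma log2_two_pow_add {t q : ℕ} (h : q < 2 ^ t) : Nat.log2 (2 ^ t + q) = t := by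
  rw [Nat.log2_eq_log_two]
  exact Nat.log_eq_of_pow_le_of_lt_pow (by omega) (by rw [pow_succ]; omega)

lemma ex_two_pow_add_s14 {t q : ℕ} (h : q < 2 ^ t) : ex (2 ^ t + q) = t * 2 ^ t + 2 * q + ex q := by
  obtain ⟨k, hk⟩ : ∃ k, 2 ^ t + q = k + 1 := ⟨2 ^ t + q - 1, by have := Nat.two_pow_pos t; omega⟩
  rw [hk, ex, ← hk, log2_two_pow_add h, Nat.add_sub_cancel_left]

lemma ex_lt_mul_of_lt_two_pow {u p : ℕ} (hp : 0 < p) (h : p < 2 ^ u) : ex p < u * p := by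
  induction u generalizing p with
  | zero => simp at h; omega
  | succ u ih =>
    rcases lt_or_ge p (2 ^ u) with hlt | hge
    · calc ex p < u * p := ih hp hlt
        _ ≤ (u + 1) * p := by gcongr; omega
    obtain ⟨q, rfl⟩ := Nat.exists_eq_add_of_le hge
    have hq : q < 2 ^ u := by rw [pow_succ] at h; omega
    rw [ex_two_pow_add_s14 hq]
    rcases Nat.eq_zero_or_pos q with rfl | hq0
    · rw [ex_zero]; nlinarith [Nat.two_pow_pos u]
    · nlinarith [ih hq0 hq]

lemma three_mul_sum_two_pow_add (c K : ℕ) :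
    3 * ∑ i ∈ range K, 2 ^ (c + 2 * i) + 2 ^ c = 2 ^ (c + 2 * K) := by
  induction K with
  | zero => simp
  | succ K ih =>
    rw [sum_range_succ, show 2 ^ (c + 2 * (K + 1)) = 4 * 2 ^ (c + 2 * K) by ring]
    omega

lemma ex_sum_two_pow_add {c q : ℕ} (K : ℕ) (hq : q < 2 ^ c) :
    ex ((∑ i ∈ range K, 2 ^ (c + 2 * i)) + q) + 2 * ∑ i ∈ range K, 2 ^ (c + 2 * i)
      = (c + 2 * K) * ∑ i ∈ range K, 2 ^ (c + 2 * i) + 2 * K * q + ex q := by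
  induction K with
  | zero => simp
  | succ K ih =>
    have hlt : (∑ i ∈ range K, 2 ^ (c + 2 * i)) + q < 2 ^ (c + 2 * K) := by
      have := three_mul_sum_two_pow_add c K
      omega
    rw [sum_range_succ, add_comm _ (2 ^ _), add_assoc, ex_two_pow_add_s14 hlt]
    nlinarith [ih]

lemma ex_three_two_pow_add {t x : ℕ} (hx : x < 2 ^ t) :
    ex (2 ^ (t + 2) + 2 ^ (t + 1) + 2 ^ t + x) = (7 * t + 18) * 2 ^ t + 6 * x + ex x := by
  have h1 : 2 ^ t + x < 2 ^ (t + 1) := by rw [pow_succ]; omega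
  have h2 : 2 ^ (t + 1) + (2 ^ t + x) < 2 ^ (t + 2) := by rw [pow_succ _ (t + 1)]; omega
  rw [add_assoc, add_assoc, ex_two_pow_add_s14 h2, ex_two_pow_add_s14 h1, ex_two_pow_add_s14 hx]
  ring

lemma xi_breakpoint_add {u p : ℕ} (K : ℕ) (hp : p < 2 ^ u) :
    (u + 2 * K + 8) * (2 ^ (u + 2 * K + 3) + 2 ^ (u + 2 * K + 2) + 2 ^ (u + 2 * K + 1)
        + (∑ i ∈ range K, 2 ^ (u + 1 + 2 * i)) + 2 ^ u + p) + ex p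
      = ex (2 ^ (u + 2 * K + 3) + 2 ^ (u + 2 * K + 2) + 2 ^ (u + 2 * K + 1)
        + (∑ i ∈ range K, 2 ^ (u + 1 + 2 * i)) + 2 ^ u + p) + 2 ^ (u + 2 * K + 6) + u * p := by
  have hq : 2 ^ u + p < 2 ^ (u + 1) := by rw [pow_succ]; omega
  have hgeom := three_mul_sum_two_pow_add (u + 1) K
  have hblock := ex_sum_two_pow_add K hq
  rw [ex_two_pow_add_s14 hp] at hblock
  rw [show u + 1 + 2 * K = u + 2 * K + 1 by ring] at hgeom
  generalize ∑ i ∈ range K, 2 ^ (u + 1 + 2 * i) = S at hgeom hblock ⊢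
  have hx : S + (2 ^ u + p) < 2 ^ (u + 2 * K + 1) := by omega
  rw [add_assoc _ (2 ^ u), add_assoc _ S, ex_three_two_pow_add hx,
    show 2 ^ (u + 2 * K + 3) = 4 * 2 ^ (u + 2 * K + 1) by ring,
    show 2 ^ (u + 2 * K + 2) = 2 * 2 ^ (u + 2 * K + 1) by ring,
    show 2 ^ (u + 2 * K + 6) = 32 * 2 ^ (u + 2 * K + 1) by ring]
  rw [pow_succ] at hgeom
  zify at hgeom hblock ⊢
  linear_combination hgeom - hblock

open Finset in
theorem xi_between_breakpoints_general (n r f p m : ℕ)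
    (hf : f = if Even n then 0 else 1)
    (hr2 : r ≤ (n+1) / 2 - 4)
    (hp1 : 1 ≤ p) (hp2 : p < 2 ^ (2*r - 1 - f))
    (hm : m = 2 ^ (n-4) + 2 ^ (n-5) + 2 ^ (n-6)
        + (∑ i ∈ range ((n+1) / 2 - 3 - r), 2 ^ (n - 8 - 2 * i)) + 2 ^ (2*r - 1 - f) + p) :
    (2 : ℤ) ^ (n-1) < ((n : ℤ) + 1) * m - ex m := by
  set u := 2 * r - 1 - f
  set K := (n + 1) / 2 - 3 - r
  have hu : 0 < u := Nat.pos_of_ne_zero fun h => by simp [h] at hp2; omega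
  have hfn : f = n % 2 := by split_ifs at hf <;> grind
  have hn : n = u + 2 * K + 7 := by omega
  have hsum : ∑ i ∈ range K, 2 ^ (n - 8 - 2 * i) = ∑ i ∈ range K, 2 ^ (u + 1 + 2 * i) := by
    rw [← sum_range_reflect]
    exact sum_congr rfl fun i hi => by rw [mem_range] at hi; congr 1; omega
  rw [hsum, hn, show u + 2 * K + 7 - 4 = u + 2 * K + 3 by omega,
    show u + 2 * K + 7 - 5 = u + 2 * K + 2 by omega,
    show u + 2 * K + 7 - 6 = u + 2 * K + 1 by omega] at hm
  have hxi := xi_breakpoint_add K hp2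
  rw [← hm] at hxi
  have hex := ex_lt_mul_of_lt_two_pow hp1 hp2
  rw [hn, show u + 2 * K + 7 - 1 = u + 2 * K + 6 by omega]
  zify at hxi hex
  push_cast
  linarith

open Finset in
/-- Case 1 of Lemma 8: for `n ≥ 9`, `1 ≤ r ≤ ⌈n/2⌉ - 4` and `1 ≤ p < 2^{2r-1-f}`,
the value `m = m_{n,r} + p` strictly between consecutive breakpoints satisfies
`(n+1)m - ex(m) > 2^{n-1}`. -/
theorem xi_between_breakpoints (n r f p m : ℕ) (hn : 9 ≤ n)
    (hf : f = if Even n then 0 else 1)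
    (hr1 : 1 ≤ r) (hr2 : r ≤ (n+1) / 2 - 4)
    (hp1 : 1 ≤ p) (hp2 : p < 2 ^ (2*r - 1 - f))
    (hm : m = 2 ^ (n-4) + 2 ^ (n-5) + 2 ^ (n-6)
        + (∑ i ∈ range ((n+1) / 2 - 3 - r), 2 ^ (n - 8 - 2 * i)) + 2 ^ (2*r - 1 - f) + p) :
    (2 : ℤ) ^ (n-1) < ((n : ℤ) + 1) * m - ex m :=
  xi_between_breakpoints_general n r f p m hf hr2 hp1 hp2 hm
end
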